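/- Let y : ℕ × ℤ⁴ → ℝ be a family of real numbers such that y(ℓ,m) = 0 whenever m ∉ N(ℓ), y(0,(0,0,0,0)) = 0, y(1,(0,0,0,0)) = 0, and Σ_{ℓ,m} y(ℓ,m)² < ∞. Then Σ_{m∈N(1), m₁=1} (1/3)·y(1,m)² + Σ_{ℓ≥2} Σ_{m∈N(ℓ)} [ α(ℓ,m₁)·y(ℓ,m)²/(ℓ+2)² + β(ℓ,m₁)·y(ℓ,m)·y(ℓ+1,m)/((ℓ+2)(ℓ+3)) ] ≥ (18/85) · Σ_{ℓ≥0} Σ_{m∈N(ℓ)} [ y(ℓ,m)² + 2·C₅(ℓ,m₁)·y(ℓ,m)·y(ℓ+1,m) ], where all series converge absolutely. (This is the spectral-gap inequality expressing, in spherical-harmonic coefficients after the Penrose transform, the coercivity Q((0,f₁),(0,f₁)) ≥ (36/85)(1/(8π))‖(0,f₁)‖² for data orthogonal to the tangent space of the manifold of maximisers.) -/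

import Mathlib

/-- `m = (m₁, m₂, m₃, m₄) ∈ ℤ⁴` belongs to `N(ℓ)` iff `ℓ ≥ m₁ ≥ m₂ ≥ m₃ ≥ |m₄|`. -/
def inN (ℓ : ℕ) (m : ℤ × ℤ × ℤ × ℤ) : Prop :=
  m.1 ≤ (ℓ : ℤ) ∧ m.2.1 ≤ m.1 ∧ m.2.2.1 ≤ m.2.1 ∧ |m.2.2.2| ≤ m.2.2.1

instance (ℓ : ℕ) (m : ℤ × ℤ × ℤ × ℤ) : Decidable (inN ℓ m) := by
  unfold inN; infer_instance

/-- The coefficient `C₅(ℓ, m₁)`. -/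
noncomputable def C₅ (ℓ : ℕ) (m₁ : ℤ) : ℝ :=
  if 0 ≤ m₁ ∧ m₁ ≤ (ℓ : ℤ) then
    (1 / 2) * Real.sqrt ((((ℓ : ℝ) - (m₁ : ℝ) + 1) * ((ℓ : ℝ) + (m₁ : ℝ) + 4)) /
      (((ℓ : ℝ) + 2) * ((ℓ : ℝ) + 3)))
  else 0

/-- The coefficient `α(ℓ, m₁)`. -/
noncomputable def αc (ℓ : ℕ) (m₁ : ℤ) : ℝ :=
  ((ℓ : ℝ) ^ 4 + 8 * (ℓ : ℝ) ^ 3 + 11 * (ℓ : ℝ) ^ 2 - 20 * (ℓ : ℝ) - 12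
      + 6 * (m₁ : ℝ) ^ 2 + 18 * (m₁ : ℝ)) / (((ℓ : ℝ) + 1) * ((ℓ : ℝ) + 3))

/-- The coefficient `β(ℓ, m₁)`. -/
noncomputable def βc (ℓ : ℕ) (m₁ : ℤ) : ℝ :=
  ((ℓ : ℝ) - 1) * ((ℓ : ℝ) + 6) *
    Real.sqrt ((((ℓ : ℝ) + 1 - (m₁ : ℝ)) * ((ℓ : ℝ) + 4 + (m₁ : ℝ))) /
      (((ℓ : ℝ) + 2) * ((ℓ : ℝ) + 3)))


namespace SGV

/-- radicand -/
noncomputable def rad (ℓ : ℕ) (m₁ : ℤ) : ℝ :=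
  (((ℓ : ℝ) + 1 - (m₁ : ℝ)) * ((ℓ : ℝ) + 4 + (m₁ : ℝ))) / (((ℓ : ℝ) + 2) * ((ℓ : ℝ) + 3))

lemma sqrtle {a b : ℝ} (hb : 0 ≤ b) (h : a ≤ b ^ 2) : Real.sqrt a ≤ b := by
  calc Real.sqrt a ≤ Real.sqrt (b ^ 2) := Real.sqrt_le_sqrt h
    _ = b := Real.sqrt_sq hb

lemma rad_le_one (ℓ : ℕ) (m₁ : ℤ) (h : 0 ≤ m₁) : rad ℓ m₁ ≤ 1 := by
  have hm : (0 : ℝ) ≤ (m₁ : ℝ) := by exact_mod_cast h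
  have hL : (0 : ℝ) ≤ (ℓ : ℝ) := Nat.cast_nonneg ℓ
  rw [rad, div_le_one (by positivity)]
  nlinarith [sq_nonneg (m₁ : ℝ)]

lemma sqrt_rad_le_one (ℓ : ℕ) (m₁ : ℤ) (h : 0 ≤ m₁) : Real.sqrt (rad ℓ m₁) ≤ 1 :=
  Real.sqrt_le_one.mpr (rad_le_one ℓ m₁ h)

lemma C₅_eq (ℓ : ℕ) (m₁ : ℤ) :
    C₅ ℓ m₁ = if 0 ≤ m₁ ∧ m₁ ≤ (ℓ : ℤ) then (1 / 2) * Real.sqrt (rad ℓ m₁) else 0 := by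
  rw [C₅, rad]
  split_ifs with h
  · rw [show ((ℓ : ℝ) - (m₁ : ℝ) + 1) * ((ℓ : ℝ) + (m₁ : ℝ) + 4)
        = ((ℓ : ℝ) + 1 - (m₁ : ℝ)) * ((ℓ : ℝ) + 4 + (m₁ : ℝ)) from by ring]
  · rfl

lemma C₅_nonneg (ℓ : ℕ) (m₁ : ℤ) : 0 ≤ C₅ ℓ m₁ := by
  rw [C₅_eq]; split_ifs with h
  · positivity
  · exact le_refl 0

lemma C₅_le_half (ℓ : ℕ) (m₁ : ℤ) : C₅ ℓ m₁ ≤ 1 / 2 := by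
  rw [C₅_eq]; split_ifs with h
  · nlinarith [sqrt_rad_le_one ℓ m₁ h.1]
  · norm_num

/-- the cross coefficient -/
noncomputable def cc (ℓ : ℕ) (m₁ : ℤ) : ℝ :=
  (if 2 ≤ ℓ then βc ℓ m₁ / (((ℓ : ℝ) + 2) * ((ℓ : ℝ) + 3)) else 0) - 36 / 85 * C₅ ℓ m₁

/-- the diagonal coefficient -/
noncomputable def dd (ℓ : ℕ) (m : ℤ × ℤ × ℤ × ℤ) : ℝ :=
  (if ℓ = 1 ∧ inN 1 m ∧ m.1 = 1 then 1 / 3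
   else if 2 ≤ ℓ then αc ℓ m.1 / ((ℓ : ℝ) + 2) ^ 2 else 0) - 18 / 85

noncomputable def rr (ℓ : ℕ) : ℝ := if ℓ = 2 then 19 / 20 else 1
noncomputable def qq (ℓ : ℕ) : ℝ := if ℓ = 2 then 20 / 19 else 1

lemma rr_pos (ℓ : ℕ) : 0 < rr ℓ := by rw [rr]; split_ifs <;> norm_num
lemma rr_le_one (ℓ : ℕ) : rr ℓ ≤ 1 := by rw [rr]; split_ifs <;> norm_num
lemma qq_nonneg (ℓ : ℕ) : 0 ≤ qq ℓ := by rw [qq]; split_ifs <;> norm_num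
lemma qq_le_two (ℓ : ℕ) : qq ℓ ≤ 2 := by rw [qq]; split_ifs <;> norm_num
lemma rr_mul_qq (ℓ : ℕ) : rr ℓ * qq ℓ = 1 := by rw [rr, qq]; split_ifs <;> norm_num

lemma gval_nonneg {ℓ : ℕ} (h2 : 2 ≤ ℓ) :
    0 ≤ ((ℓ : ℝ) - 1) * ((ℓ : ℝ) + 6) / (((ℓ : ℝ) + 2) * ((ℓ : ℝ) + 3)) - 18 / 85 := by
  have hL : (2 : ℝ) ≤ (ℓ : ℝ) := by exact_mod_cast h2
  rw [sub_nonneg, le_div_iff₀ (by positivity)]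
  nlinarith

lemma gval_le_one {ℓ : ℕ} (h2 : 2 ≤ ℓ) :
    ((ℓ : ℝ) - 1) * ((ℓ : ℝ) + 6) / (((ℓ : ℝ) + 2) * ((ℓ : ℝ) + 3)) - 18 / 85 ≤ 1 := by
  have hL : (2 : ℝ) ≤ (ℓ : ℝ) := by exact_mod_cast h2
  have : ((ℓ : ℝ) - 1) * ((ℓ : ℝ) + 6) / (((ℓ : ℝ) + 2) * ((ℓ : ℝ) + 3)) ≤ 1 := by
    rw [div_le_one (by positivity)]; nlinarith
  linarith

lemma cc_eq {ℓ : ℕ} {m₁ : ℤ} (h2 : 2 ≤ ℓ) (h0 : 0 ≤ m₁) (hl : m₁ ≤ (ℓ : ℤ)) :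
    cc ℓ m₁ = (((ℓ : ℝ) - 1) * ((ℓ : ℝ) + 6) / (((ℓ : ℝ) + 2) * ((ℓ : ℝ) + 3)) - 18 / 85)
      * Real.sqrt (rad ℓ m₁) := by
  rw [cc, βc, C₅_eq, if_pos h2, if_pos ⟨h0, hl⟩]
  rw [show (((ℓ : ℝ) + 1 - (m₁ : ℝ)) * ((ℓ : ℝ) + 4 + (m₁ : ℝ))) /
      (((ℓ : ℝ) + 2) * ((ℓ : ℝ) + 3)) = rad ℓ m₁ from rfl]
  ring

lemma cc_eq_zero {ℓ : ℕ} {m₁ : ℤ} (hl : (ℓ : ℤ) < m₁) : cc ℓ m₁ = 0 := by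
  have hL : ((ℓ : ℝ)) < (m₁ : ℝ) := by exact_mod_cast hl
  have hrad : (((ℓ : ℝ) + 1 - (m₁ : ℝ)) * ((ℓ : ℝ) + 4 + (m₁ : ℝ))) /
      (((ℓ : ℝ) + 2) * ((ℓ : ℝ) + 3)) ≤ 0 := by
    apply div_nonpos_of_nonpos_of_nonneg
    · have hm1 : ((ℓ : ℝ)) + 1 ≤ (m₁ : ℝ) := by
        have : (ℓ : ℤ) + 1 ≤ m₁ := hl
        exact_mod_cast this
      nlinarith [Nat.cast_nonneg (α := ℝ) ℓ]
    · positivity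
  have hsq : Real.sqrt ((((ℓ : ℝ) + 1 - (m₁ : ℝ)) * ((ℓ : ℝ) + 4 + (m₁ : ℝ))) /
      (((ℓ : ℝ) + 2) * ((ℓ : ℝ) + 3))) = 0 := Real.sqrt_eq_zero'.mpr hrad
  have hC : C₅ ℓ m₁ = 0 := by rw [C₅_eq, if_neg (by omega)]
  rw [cc, βc, hsq, hC]
  split_ifs <;> simp

lemma cc_abs_le {ℓ : ℕ} {m₁ : ℤ} (h2 : 2 ≤ ℓ) (h0 : 0 ≤ m₁) :
    |cc ℓ m₁| ≤ ((ℓ : ℝ) - 1) * ((ℓ : ℝ) + 6) / (((ℓ : ℝ) + 2) * ((ℓ : ℝ) + 3)) - 18 / 85 := by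
  by_cases hl : m₁ ≤ (ℓ : ℤ)
  · rw [cc_eq h2 h0 hl,
      abs_of_nonneg (mul_nonneg (gval_nonneg h2) (Real.sqrt_nonneg _))]
    exact mul_le_of_le_one_right (gval_nonneg h2) (sqrt_rad_le_one ℓ m₁ h0)
  · rw [cc_eq_zero (by omega), abs_zero]; exact gval_nonneg h2

lemma cc_abs_le_two (ℓ : ℕ) (m₁ : ℤ) (h0 : 0 ≤ m₁) : |cc ℓ m₁| ≤ 2 := by
  by_cases h2 : 2 ≤ ℓ
  · have := cc_abs_le h2 h0
    have := gval_le_one h2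
    linarith
  · rw [cc, if_neg h2, zero_sub, abs_neg,
      abs_of_nonneg (mul_nonneg (by norm_num) (C₅_nonneg ℓ m₁))]
    nlinarith [C₅_le_half ℓ m₁, C₅_nonneg ℓ m₁]

lemma αc_bounds {ℓ : ℕ} {m₁ : ℤ} (h2 : 2 ≤ ℓ) (h0 : 0 ≤ m₁) (hl : m₁ ≤ (ℓ : ℤ)) :
    0 ≤ αc ℓ m₁ ∧ αc ℓ m₁ ≤ 2 * ((ℓ : ℝ) + 2) ^ 2 := by
  have hL : (2 : ℝ) ≤ (ℓ : ℝ) := by exact_mod_cast h2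
  have hm : (0 : ℝ) ≤ (m₁ : ℝ) := by exact_mod_cast h0
  have hml : (m₁ : ℝ) ≤ (ℓ : ℝ) := by exact_mod_cast hl
  constructor
  · rw [αc]; apply div_nonneg _ (by positivity); nlinarith
  · rw [αc, div_le_iff₀ (by positivity)]; nlinarith

lemma βc_bounds {ℓ : ℕ} {m₁ : ℤ} (h2 : 2 ≤ ℓ) (h0 : 0 ≤ m₁) :
    0 ≤ βc ℓ m₁ ∧ βc ℓ m₁ ≤ ((ℓ : ℝ) + 2) * ((ℓ : ℝ) + 3) := by
  have hL : (2 : ℝ) ≤ (ℓ : ℝ) := by exact_mod_cast h2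
  have hs0 : 0 ≤ Real.sqrt (rad ℓ m₁) := Real.sqrt_nonneg _
  have hs1 : Real.sqrt (rad ℓ m₁) ≤ 1 := sqrt_rad_le_one ℓ m₁ h0
  have hβ : βc ℓ m₁ = ((ℓ : ℝ) - 1) * ((ℓ : ℝ) + 6) * Real.sqrt (rad ℓ m₁) := rfl
  rw [hβ]
  constructor
  · apply mul_nonneg (by nlinarith) hs0
  · have h1 : (0:ℝ) ≤ ((ℓ : ℝ) - 1) * ((ℓ : ℝ) + 6) := by nlinarith
    have h3 := mul_le_of_le_one_right h1 hs1
    nlinarith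

lemma inN_bounds {ℓ : ℕ} {m : ℤ × ℤ × ℤ × ℤ} (h : inN ℓ m) : 0 ≤ m.1 ∧ m.1 ≤ (ℓ : ℤ) := by
  obtain ⟨h1, h2, h3, h4⟩ := h
  have := abs_nonneg m.2.2.2
  constructor <;> omega

lemma inN_m1_zero {ℓ : ℕ} {m : ℤ × ℤ × ℤ × ℤ} (h : inN ℓ m) (h0 : m.1 = 0) :
    m = (0, 0, 0, 0) := by
  obtain ⟨a, b, c, d⟩ := m
  obtain ⟨h1, h2, h3, h4⟩ := h
  simp only at h0 h2 h3 h4 ⊢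
  rw [abs_le] at h4
  refine Prod.ext h0 (Prod.ext ?_ (Prod.ext ?_ ?_)) <;> simp <;> omega

abbrev I4 := ℤ × ℤ × ℤ × ℤ

section Y
variable (y : ℕ → I4 → ℝ)

noncomputable def tt (p : ℕ × I4) : ℝ :=
  if y p.1 p.2 = 0 then 0 else rr p.1 * |cc p.1 p.2.1| / 2

noncomputable def ss (p : ℕ × I4) : ℝ :=
  if y p.1 p.2 = 0 then 0 else qq p.1 * |cc p.1 p.2.1| / 2

noncomputable def ss' (p : ℕ × I4) : ℝ :=
  if p.1 = 0 then 0 else ss y (p.1 - 1, p.2)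

noncomputable def FF1 (m : I4) : ℝ :=
  if inN 1 m ∧ m.1 = 1 then (1 / 3) * y 1 m ^ 2 else 0

noncomputable def FF1' (p : ℕ × I4) : ℝ :=
  if p.1 = 1 then FF1 y p.2 else 0

noncomputable def FF2 (p : ℕ × I4) : ℝ :=
  if 2 ≤ p.1 then
    αc p.1 p.2.1 * y p.1 p.2 ^ 2 / ((p.1 : ℝ) + 2) ^ 2
      + βc p.1 p.2.1 * y p.1 p.2 * y (p.1 + 1) p.2 / (((p.1 : ℝ) + 2) * ((p.1 : ℝ) + 3))
  else 0

noncomputable def GG (p : ℕ × I4) : ℝ :=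
  y p.1 p.2 ^ 2 + 2 * C₅ p.1 p.2.1 * y p.1 p.2 * y (p.1 + 1) p.2

lemma Heq (p : ℕ × I4) :
    FF1' y p + FF2 y p - 18 / 85 * GG y p
      = dd p.1 p.2 * y p.1 p.2 ^ 2 + cc p.1 p.2.1 * (y p.1 p.2 * y (p.1 + 1) p.2) := by
  obtain ⟨ℓ, m⟩ := p
  by_cases h1 : ℓ = 1 ∧ inN 1 m ∧ m.1 = 1
  · obtain ⟨h1a, h1b⟩ := h1
    subst h1a
    rw [FF1', FF2, GG, dd, cc, FF1]
    simp only [if_pos (rfl : (1:ℕ) = 1), if_pos h1b,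
      if_pos (⟨rfl, h1b⟩ : (1:ℕ) = 1 ∧ inN 1 m ∧ m.1 = 1),
      if_neg (by omega : ¬ ((2:ℕ) ≤ 1)), true_and, if_true]
    ring
  · by_cases h2 : 2 ≤ ℓ
    · have hne : ℓ ≠ 1 := by omega
      rw [FF1', FF2, GG, dd, cc]
      simp only [if_neg hne, if_neg h1, if_pos h2]
      ring
    · have hF1 : FF1' y (ℓ, m) = 0 := by
        rw [FF1']
        by_cases hℓ : ℓ = 1
        · subst hℓ
          rw [if_pos rfl, FF1, if_neg (fun hc => h1 ⟨rfl, hc⟩)]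
        · exact if_neg hℓ
      rw [hF1, FF2, GG, dd, cc]
      simp only [if_neg h1, if_neg h2]
      ring

lemma amgm (p : ℕ × I4) :
    (dd p.1 p.2 - tt y p) * y p.1 p.2 ^ 2 - ss y p * y (p.1 + 1) p.2 ^ 2
      ≤ FF1' y p + FF2 y p - 18 / 85 * GG y p := by
  rw [Heq]
  by_cases hy : y p.1 p.2 = 0
  · simp [tt, ss, hy]
  · rw [tt, ss, if_neg hy, if_neg hy]
    have hr := rr_pos p.1
    have hq := qq_nonneg p.1
    have hrq := rr_mul_qq p.1
    set a := y p.1 p.2 with ha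
    set b := y (p.1 + 1) p.2 with hb
    set c := cc p.1 p.2.1 with hc
    have h8 : 0 ≤ |c| := abs_nonneg c
    have h1 : 0 ≤ |c| * (qq p.1 * (rr p.1 * a - b) ^ 2) := by positivity
    have h2 : 0 ≤ |c| * (qq p.1 * (rr p.1 * a + b) ^ 2) := by positivity
    have e1 : |c| * (qq p.1 * (rr p.1 * a - b) ^ 2)
        = rr p.1 * |c| * a ^ 2 + qq p.1 * |c| * b ^ 2 - 2 * |c| * (a * b) := by
      linear_combination (|c| * a ^ 2 * rr p.1 - 2 * |c| * (a * b)) * hrq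
    have e2 : |c| * (qq p.1 * (rr p.1 * a + b) ^ 2)
        = rr p.1 * |c| * a ^ 2 + qq p.1 * |c| * b ^ 2 + 2 * |c| * (a * b) := by
      linear_combination (|c| * a ^ 2 * rr p.1 + 2 * |c| * (a * b)) * hrq
    rcases le_or_gt 0 (a * b) with hab | hab
    · have hc1 : -|c| * (a * b) ≤ c * (a * b) :=
        mul_le_mul_of_nonneg_right (neg_abs_le c) hab
      nlinarith
    · have hc1 : |c| * (a * b) ≤ c * (a * b) :=
        mul_le_mul_of_nonpos_right (le_abs_self c) hab.le
      nlinarith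

lemma cc_abs_le_num {ℓ : ℕ} {m₁ : ℤ} (h2 : 2 ≤ ℓ) (h0 : 0 ≤ m₁) (hl : m₁ ≤ (ℓ : ℤ))
    {g q : ℝ} (hg : ((ℓ : ℝ) - 1) * ((ℓ : ℝ) + 6) / (((ℓ : ℝ) + 2) * ((ℓ : ℝ) + 3)) - 18 / 85 = g)
    (hq : 0 ≤ q) (hrq : rad ℓ m₁ ≤ q ^ 2) : |cc ℓ m₁| ≤ g * q := by
  have hg0 : 0 ≤ g := hg ▸ gval_nonneg h2
  rw [cc_eq h2 h0 hl, hg, abs_of_nonneg (mul_nonneg hg0 (Real.sqrt_nonneg _))]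
  exact mul_le_mul_of_nonneg_left (sqrtle hq hrq) hg0

lemma cc11_bound : |cc 1 1| ≤ 18 / 85 * (708 / 1000) := by
  have hC : C₅ 1 1 = (1 / 2) * Real.sqrt (rad 1 1) := by
    rw [C₅_eq, if_pos (by norm_num : (0:ℤ) ≤ 1 ∧ (1:ℤ) ≤ ((1:ℕ):ℤ))]
  have hrad : rad 1 1 = 1 / 2 := by rw [rad]; norm_num
  have hs : Real.sqrt (rad 1 1) ≤ 708 / 1000 := by
    rw [hrad]; exact sqrtle (by norm_num) (by norm_num)
  have hs0 : 0 ≤ Real.sqrt (rad 1 1) := Real.sqrt_nonneg _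
  have : cc 1 1 = -(36 / 85 * C₅ 1 1) := by
    rw [cc, if_neg (by omega : ¬ ((2:ℕ) ≤ 1))]; ring
  rw [this, abs_neg, abs_of_nonneg (mul_nonneg (by norm_num) (C₅_nonneg 1 1)), hC]
  nlinarith

lemma generic (x μ : ℝ) (hx : 0 ≤ x) (hμ : 0 ≤ μ) :
    ((x + 4 - 1) * (x + 4 + 6) / ((x + 4 + 2) * (x + 4 + 3)) - 18 / 85) / 2
      + ((x + 3 - 1) * (x + 3 + 6) / ((x + 3 + 2) * (x + 3 + 3)) - 18 / 85) / 2
      ≤ ((x + 4) ^ 4 + 8 * (x + 4) ^ 3 + 11 * (x + 4) ^ 2 - 20 * (x + 4) - 12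
            + 6 * μ ^ 2 + 18 * μ) / ((x + 4 + 1) * (x + 4 + 3)) / (x + 4 + 2) ^ 2 - 18 / 85 := by
  rw [← sub_nonneg]
  have key : ((x + 4) ^ 4 + 8 * (x + 4) ^ 3 + 11 * (x + 4) ^ 2 - 20 * (x + 4) - 12
            + 6 * μ ^ 2 + 18 * μ) / ((x + 4 + 1) * (x + 4 + 3)) / (x + 4 + 2) ^ 2 - 18 / 85
      - (((x + 4 - 1) * (x + 4 + 6) / ((x + 4 + 2) * (x + 4 + 3)) - 18 / 85) / 2
      + ((x + 3 - 1) * (x + 3 + 6) / ((x + 3 + 2) * (x + 3 + 3)) - 18 / 85) / 2)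
      = (6 * μ ^ 2 + 18 * μ + 24) / ((x + 5) * (x + 7) * (x + 6) ^ 2) := by
    have h5 : (x + 5) ≠ 0 := by positivity
    have h6 : (x + 6) ≠ 0 := by positivity
    have h7 : (x + 7) ≠ 0 := by positivity
    field_simp
    ring
  rw [key]
  apply div_nonneg (by nlinarith) (by positivity)

lemma core (y : ℕ → I4 → ℝ) (hyN : ∀ ℓ m, ¬ inN ℓ m → y ℓ m = 0)
    (hy0 : y 0 (0, 0, 0, 0) = 0) (hy1 : y 1 (0, 0, 0, 0) = 0) (p : ℕ × I4) :
    0 ≤ (dd p.1 p.2 - tt y p - ss' y p) * y p.1 p.2 ^ 2 := by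
  obtain ⟨ℓ, m⟩ := p
  by_cases hy : y ℓ m = 0
  · simp [hy]
  apply mul_nonneg _ (sq_nonneg _)
  have hm : inN ℓ m := by by_contra h; exact hy (hyN ℓ m h)
  have hb := inN_bounds hm
  have hb1 := hb.1
  have hb2 := hb.2
  have htt : tt y (ℓ, m) = rr ℓ * |cc ℓ m.1| / 2 := if_neg hy
  rw [sub_sub, sub_nonneg]
  rcases ℓ with _ | _ | _ | _ | n
  · -- ℓ = 0
    exfalso
    have hm0 : m.1 = 0 := by simp at hb2; omega
    rw [inN_m1_zero hm hm0] at hy; exact hy hy0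
  · -- ℓ = 1
    show tt y (1, m) + ss' y (1, m) ≤ dd 1 m
    have h01 : m.1 = 0 ∨ m.1 = 1 := by simp at hb2; omega
    rcases h01 with hm1 | hm1
    · exfalso; rw [inN_m1_zero hm hm1] at hy; exact hy hy1
    · have hdd : dd 1 m = 1 / 3 - 18 / 85 := by rw [dd, if_pos ⟨rfl, hm, hm1⟩]
      have hss : ss' y (1, m) = 0 := by
        have hy0m : y 0 m = 0 := by
          apply hyN; intro h; have := (inN_bounds h).2; simp at this; omega
        show ss y (0, m) = 0
        rw [ss, if_pos hy0m]
      have hccb : |cc 1 m.1| ≤ 18 / 85 := by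
        rw [hm1]
        have : cc 1 1 = -(36 / 85 * C₅ 1 1) := by
          rw [cc, if_neg (by omega : ¬ ((2:ℕ) ≤ 1))]; ring
        rw [this, abs_neg, abs_of_nonneg (mul_nonneg (by norm_num) (C₅_nonneg 1 1))]
        nlinarith [C₅_le_half 1 1, C₅_nonneg 1 1]
      have hrr : rr 1 = 1 := by rw [rr]; norm_num
      rw [htt, hss, hdd, hrr]
      linarith
  · -- ℓ = 2
    show tt y (2, m) + ss' y (2, m) ≤ dd 2 m
    have hrr : rr 2 = 19 / 20 := by rw [rr, if_pos rfl]
    have hdd : dd 2 m = αc 2 m.1 / ((2:ℝ) + 2) ^ 2 - 18 / 85 := by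
      rw [dd, if_neg (fun h => absurd h.1 (by omega)), if_pos (le_refl 2)]
      norm_num
    have h012 : m.1 = 0 ∨ m.1 = 1 ∨ m.1 = 2 := by simp at hb2; omega
    rcases h012 with hm1 | hm1 | hm1
    · have hss : ss' y (2, m) = 0 := by
        have hy1m : y 1 m = 0 := by
          by_cases hin : inN 1 m
          · rw [inN_m1_zero hin hm1]; exact hy1
          · exact hyN 1 m hin
        show ss y (1, m) = 0
        rw [ss, if_pos hy1m]
      have hαc : αc 2 m.1 = 72 / 15 := by rw [hm1, αc]; norm_num
      have hcc : |cc 2 m.1| ≤ 16 / 85 * (949 / 1000) := by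
        rw [hm1]
        refine cc_abs_le_num (le_refl 2) le_rfl (by norm_num) (by norm_num) (by norm_num) ?_
        rw [rad]; norm_num
      rw [htt, hss, hdd, hrr, hαc]
      linarith
    · have hss : ss' y (2, m) ≤ 9 / 85 * (708 / 1000) := by
        show ss y (1, m) ≤ _
        rw [ss]
        split_ifs with h
        · norm_num
        · have hq1 : qq 1 = 1 := by rw [qq]; norm_num
          show qq 1 * |cc 1 m.1| / 2 ≤ _
          rw [hq1, hm1]
          have := cc11_bound
          linarith
      have hαc : αc 2 m.1 = 96 / 15 := by rw [hm1, αc]; norm_num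
      have hcc : |cc 2 m.1| ≤ 16 / 85 * (837 / 1000) := by
        rw [hm1]
        refine cc_abs_le_num (le_refl 2) (by norm_num) (by norm_num) (by norm_num) (by norm_num) ?_
        rw [rad]; norm_num
      rw [htt, hdd, hrr, hαc]
      linarith
    · have hss : ss' y (2, m) = 0 := by
        have hy1m : y 1 m = 0 := by
          apply hyN; intro hin
          have := (inN_bounds hin).2; simp at this; omega
        show ss y (1, m) = 0
        rw [ss, if_pos hy1m]
      have hαc : αc 2 m.1 = 132 / 15 := by rw [hm1, αc]; norm_num
      have hcc : |cc 2 m.1| ≤ 16 / 85 := by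
        have := cc_abs_le (ℓ := 2) (le_refl 2) hb1
        norm_num at this
        exact this
      rw [htt, hss, hdd, hrr, hαc]
      linarith
  · -- ℓ = 3
    show tt y (3, m) + ss' y (3, m) ≤ dd 3 m
    have hμ0 : (0:ℝ) ≤ (m.1 : ℝ) := by exact_mod_cast hb1
    have hrr : rr 3 = 1 := by rw [rr]; norm_num
    have hdd : dd 3 m = αc 3 m.1 / ((3:ℝ) + 2) ^ 2 - 18 / 85 := by
      rw [dd, if_neg (fun h => absurd h.1 (by omega)), if_pos (by omega)]
      norm_num
    have hα : (27 / 2 : ℝ) ≤ αc 3 m.1 := by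
      rw [αc]
      rw [le_div_iff₀ (by norm_num)]
      push_cast
      nlinarith
    have htb : |cc 3 m.1| ≤ 33 / 85 := by
      have := cc_abs_le (ℓ := 3) (by omega) hb1
      norm_num at this
      exact this
    have hsb : ss' y (3, m) ≤ 10 / 19 * (16 / 85) := by
      show ss y (2, m) ≤ _
      rw [ss]
      split_ifs with h
      · norm_num
      · have hq2 : qq 2 = 20 / 19 := by rw [qq, if_pos rfl]
        show qq 2 * |cc 2 m.1| / 2 ≤ _
        have h2 : |cc 2 m.1| ≤ 16 / 85 := by
          have := cc_abs_le (ℓ := 2) (le_refl 2) hb1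
          norm_num at this
          exact this
        rw [hq2]
        linarith
    rw [htt, hdd, hrr]
    linarith
  · -- ℓ = n + 4
    show tt y (n + 4, m) + ss' y (n + 4, m) ≤ dd (n + 4) m
    simp only [show n + 1 + 1 + 1 + 1 = n + 4 from by omega] at htt
    have hx : (0:ℝ) ≤ (n : ℝ) := Nat.cast_nonneg n
    have hμ0 : (0:ℝ) ≤ (m.1 : ℝ) := by exact_mod_cast hb1
    set x := (n : ℝ) with hxdef
    set μ := (m.1 : ℝ) with hμdef
    have hdd : dd (n + 4) m = ((x + 4) ^ 4 + 8 * (x + 4) ^ 3 + 11 * (x + 4) ^ 2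
        - 20 * (x + 4) - 12 + 6 * μ ^ 2 + 18 * μ) / ((x + 4 + 1) * (x + 4 + 3))
        / (x + 4 + 2) ^ 2 - 18 / 85 := by
      rw [dd, if_neg (fun h => absurd h.1 (by omega)), if_pos (by omega), αc]
      simp only [hxdef, hμdef]
      push_cast
      ring_nf
    have hrr : rr (n + 4) = 1 := by rw [rr, if_neg (by omega)]
    have ht1 : |cc (n + 4) m.1| ≤ (x + 4 - 1) * (x + 4 + 6) / ((x + 4 + 2) * (x + 4 + 3))
        - 18 / 85 := by
      have h := cc_abs_le (ℓ := n + 4) (by omega) hb1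
      push_cast at h
      convert h using 3 <;> push_cast <;> ring
    have hs1 : ss' y (n + 4, m) ≤ ((x + 3 - 1) * (x + 3 + 6) / ((x + 3 + 2) * (x + 3 + 3))
        - 18 / 85) / 2 := by
      have hg : 0 ≤ (x + 3 - 1) * (x + 3 + 6) / ((x + 3 + 2) * (x + 3 + 3)) - 18 / 85 := by
        have := gval_nonneg (ℓ := n + 3) (by omega)
        push_cast at this
        convert this using 3 <;> push_cast <;> ring
      show ss y (n + 3, m) ≤ _
      rw [ss]
      split_ifs with h
      · linarith
      · have hq : qq (n + 3) = 1 := by rw [qq, if_neg (by omega)]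
        show qq (n + 3) * |cc (n + 3) m.1| / 2 ≤ _
        rw [hq, one_mul]
        have h2 : |cc (n + 3) m.1| ≤ (x + 3 - 1) * (x + 3 + 6) / ((x + 3 + 2) * (x + 3 + 3))
            - 18 / 85 := by
          have h' := cc_abs_le (ℓ := n + 3) (by omega) hb1
          push_cast at h'
          convert h' using 3 <;> push_cast <;> ring
        have := abs_nonneg (cc (n + 3) m.1)
        linarith
    have hgen := generic x μ hx hμ0
    rw [htt, hdd, hrr]
    linarith


end Y

lemma dd_bounds {ℓ : ℕ} {m : I4} (h0 : 0 ≤ m.1) (hl : m.1 ≤ (ℓ : ℤ)) :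
    -(18 / 85) ≤ dd ℓ m ∧ dd ℓ m ≤ 2 := by
  rw [dd]; split_ifs with h1 h2
  · norm_num
  · have hα := αc_bounds h2 h0 hl
    have hL2 : (0:ℝ) < ((ℓ:ℝ) + 2) ^ 2 := by positivity
    constructor
    · have : 0 ≤ αc ℓ m.1 / ((ℓ:ℝ) + 2) ^ 2 := div_nonneg hα.1 hL2.le
      linarith
    · have : αc ℓ m.1 / ((ℓ:ℝ) + 2) ^ 2 ≤ 2 := by
        rw [div_le_iff₀ hL2]; linarith [hα.2]
      linarith
  · norm_num

lemma ss_bounds (y : ℕ → I4 → ℝ) (hyN : ∀ ℓ m, ¬ inN ℓ m → y ℓ m = 0) (q : ℕ × I4) :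
    0 ≤ ss y q ∧ ss y q ≤ 2 := by
  rw [ss]; split_ifs with h
  · norm_num
  · have hin : inN q.1 q.2 := by
      by_contra hc; exact h (hyN q.1 q.2 hc)
    have hb : 0 ≤ q.2.1 := (inN_bounds hin).1
    have h1 := cc_abs_le_two q.1 q.2.1 hb
    have h2 := qq_le_two q.1
    have h3 := qq_nonneg q.1
    have h4 := abs_nonneg (cc q.1 q.2.1)
    constructor
    · positivity
    · nlinarith

end SGV

open SGV in
set_option maxHeartbeats 1000000 in
theorem spectral_gap_velocity'
    (y : ℕ → I4 → ℝ)
    (hyN : ∀ (ℓ : ℕ) (m : ℤ × ℤ × ℤ × ℤ), ¬ inN ℓ m → y ℓ m = 0)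
    (hy0 : y 0 (0, 0, 0, 0) = 0)
    (hy1 : y 1 (0, 0, 0, 0) = 0)
    (hsum : Summable fun p : ℕ × (ℤ × ℤ × ℤ × ℤ) => y p.1 p.2 ^ 2) :
    (Summable fun m : I4 => |FF1 y m|) ∧
    (Summable fun p : ℕ × I4 => |FF2 y p|) ∧
    (Summable fun p : ℕ × I4 => |GG y p|) ∧
    (18 / 85) * ∑' p : ℕ × I4, GG y p
      ≤ (∑' m : I4, FF1 y m) + ∑' p : ℕ × I4, FF2 y p := by
  classical
  -- injections
  have hσinj : Function.Injective (fun p : ℕ × I4 => ((p.1 + 1, p.2) : ℕ × I4)) := by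
    intro p q h
    rw [Prod.ext_iff] at h ⊢
    obtain ⟨h1, h2⟩ := h
    simp only at h1 h2
    exact ⟨by omega, h2⟩
  have hιinj : Function.Injective (fun m : I4 => ((1, m) : ℕ × I4)) := by
    intro a b h
    exact (Prod.ext_iff.mp h).2
  have hsum' : Summable fun p : ℕ × I4 => y (p.1 + 1) p.2 ^ 2 := by
    have h := hsum.comp_injective hσinj
    simpa [Function.comp_def] using h
  have hbase : Summable fun p : ℕ × I4 => y p.1 p.2 ^ 2 + y (p.1 + 1) p.2 ^ 2 :=
    hsum.add hsum'
  have hsupp : ∀ (ℓ : ℕ) (m : I4), y ℓ m ≠ 0 → 0 ≤ m.1 ∧ m.1 ≤ (ℓ : ℤ) := by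
    intro ℓ m h
    refine inN_bounds ?_
    by_contra hc; exact h (hyN ℓ m hc)
  -- bound for GG
  have hGb : ∀ p : ℕ × I4, |GG y p| ≤ 2 * (y p.1 p.2 ^ 2 + y (p.1 + 1) p.2 ^ 2) := by
    intro p
    have h5 := C₅_nonneg p.1 p.2.1
    have h6 := C₅_le_half p.1 p.2.1
    set a := y p.1 p.2
    set b := y (p.1 + 1) p.2
    set C := C₅ p.1 p.2.1
    have habs : |GG y p| = |a ^ 2 + 2 * C * a * b| := rfl
    rw [habs, abs_le]
    have k1 : 0 ≤ C * (a - b) ^ 2 := by positivity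
    have k2 : 0 ≤ C * (a + b) ^ 2 := by positivity
    have k3 : 0 ≤ (1 / 2 - C) * (a ^ 2 + b ^ 2) :=
      mul_nonneg (by linarith) (by positivity)
    constructor <;> nlinarith
  have sGabs : Summable fun p : ℕ × I4 => |GG y p| :=
    Summable.of_nonneg_of_le (fun _ => abs_nonneg _) hGb (hbase.mul_left 2)
  -- bound for FF2
  have hF2b : ∀ p : ℕ × I4, |FF2 y p| ≤ 3 * (y p.1 p.2 ^ 2 + y (p.1 + 1) p.2 ^ 2) := by
    intro p
    by_cases h2 : 2 ≤ p.1
    · by_cases hy : y p.1 p.2 = 0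
      · have : FF2 y p = 0 := by rw [FF2, if_pos h2, hy]; ring
        rw [this, abs_zero]; positivity
      · obtain ⟨hb0, hbl⟩ := hsupp p.1 p.2 hy
        have hα := αc_bounds h2 hb0 hbl
        have hβ := βc_bounds h2 hb0
        have hL2 : (0:ℝ) < ((p.1:ℝ) + 2) ^ 2 := by positivity
        have hL3 : (0:ℝ) < ((p.1:ℝ) + 2) * ((p.1:ℝ) + 3) := by positivity
        set a := y p.1 p.2
        set b := y (p.1 + 1) p.2
        have hF : FF2 y p = αc p.1 p.2.1 * a ^ 2 / ((p.1:ℝ) + 2) ^ 2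
            + βc p.1 p.2.1 * a * b / (((p.1:ℝ) + 2) * ((p.1:ℝ) + 3)) := by
          rw [FF2, if_pos h2]
        have t1 : |αc p.1 p.2.1 * a ^ 2 / ((p.1:ℝ) + 2) ^ 2| ≤ 2 * a ^ 2 := by
          rw [abs_div, abs_of_nonneg (mul_nonneg hα.1 (sq_nonneg a)),
            abs_of_pos hL2, div_le_iff₀ hL2]
          nlinarith [hα.2, sq_nonneg a]
        have t2 : |βc p.1 p.2.1 * a * b / (((p.1:ℝ) + 2) * ((p.1:ℝ) + 3))| ≤ |a| * |b| := by
          rw [abs_div, abs_of_pos hL3, div_le_iff₀ hL3, abs_mul, abs_mul,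
            abs_of_nonneg hβ.1]
          have hab : 0 ≤ |a| * |b| := by positivity
          nlinarith [hβ.2]
        have t3 : |a| * |b| ≤ (a ^ 2 + b ^ 2) / 2 := by
          nlinarith [sq_nonneg (|a| - |b|), sq_abs a, sq_abs b]
        calc |FF2 y p| ≤ |αc p.1 p.2.1 * a ^ 2 / ((p.1:ℝ) + 2) ^ 2|
              + |βc p.1 p.2.1 * a * b / (((p.1:ℝ) + 2) * ((p.1:ℝ) + 3))| := by
              rw [hF]; exact abs_add_le _ _
          _ ≤ 3 * (a ^ 2 + b ^ 2) := by nlinarith [sq_nonneg a, sq_nonneg b]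
    · have : FF2 y p = 0 := by rw [FF2, if_neg h2]
      rw [this, abs_zero]; positivity
  have sF2abs : Summable fun p : ℕ × I4 => |FF2 y p| :=
    Summable.of_nonneg_of_le (fun _ => abs_nonneg _) hF2b (hbase.mul_left 3)
  -- bound for FF1
  have hF1b : ∀ m : I4, |FF1 y m| ≤ y 1 m ^ 2 := by
    intro m
    rw [FF1]
    split_ifs with h
    · rw [abs_of_nonneg (by positivity)]
      nlinarith [sq_nonneg (y 1 m)]
    · rw [abs_zero]; positivity
  have sy1 : Summable fun m : I4 => y 1 m ^ 2 := by
    have h := hsum.comp_injective hιinj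
    simpa [Function.comp_def] using h
  have sF1abs : Summable fun m : I4 => |FF1 y m| :=
    Summable.of_nonneg_of_le (fun _ => abs_nonneg _) hF1b sy1
  refine ⟨sF1abs, sF2abs, sGabs, ?_⟩
  -- non-abs summability
  have sG : Summable (GG y) := summable_abs_iff.mp sGabs
  have sF2 : Summable (FF2 y) := summable_abs_iff.mp sF2abs
  have sF1 : Summable (FF1 y) := summable_abs_iff.mp sF1abs
  have hF1'b : ∀ p : ℕ × I4, |FF1' y p| ≤ y p.1 p.2 ^ 2 := by
    intro p
    rw [FF1']
    split_ifs with h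
    · rw [h]; exact hF1b p.2
    · rw [abs_zero]; positivity
  have sF1' : Summable (FF1' y) :=
    summable_abs_iff.mp
      (Summable.of_nonneg_of_le (fun _ => abs_nonneg _) hF1'b hsum)
  -- summability of quadratic pieces
  have sA : Summable fun p : ℕ × I4 => (dd p.1 p.2 - tt y p) * y p.1 p.2 ^ 2 := by
    apply summable_abs_iff.mp
    apply Summable.of_nonneg_of_le (fun _ => abs_nonneg _) _ (hsum.mul_left 4)
    intro p
    by_cases hy : y p.1 p.2 = 0
    · simp [hy]
    · obtain ⟨hb0, hbl⟩ := hsupp p.1 p.2 hy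
      have hd := dd_bounds hb0 hbl
      have htt : tt y p = rr p.1 * |cc p.1 p.2.1| / 2 := if_neg hy
      have h1 := cc_abs_le_two p.1 p.2.1 hb0
      have h2 := rr_le_one p.1
      have h3 := (rr_pos p.1).le
      have h4 := abs_nonneg (cc p.1 p.2.1)
      have htb : 0 ≤ tt y p ∧ tt y p ≤ 1 := by
        rw [htt]; constructor
        · positivity
        · nlinarith
      rw [abs_mul, abs_of_nonneg (sq_nonneg (y p.1 p.2))]
      have : |dd p.1 p.2 - tt y p| ≤ 4 := by
        rw [abs_le]; constructor <;> [linarith [hd.1, htb.2]; linarith [hd.2, htb.1]]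
      nlinarith [sq_nonneg (y p.1 p.2)]
  have sB : Summable fun p : ℕ × I4 => ss y p * y (p.1 + 1) p.2 ^ 2 := by
    apply Summable.of_nonneg_of_le _ _ (hsum'.mul_left 2)
    · intro p; exact mul_nonneg (ss_bounds y hyN p).1 (sq_nonneg _)
    · intro p
      exact mul_le_mul_of_nonneg_right (ss_bounds y hyN p).2 (sq_nonneg _)
  have hss'b : ∀ p : ℕ × I4, 0 ≤ ss' y p ∧ ss' y p ≤ 2 := by
    intro p
    rw [ss']
    split_ifs with h
    · norm_num
    · exact ss_bounds y hyN _
  have sB' : Summable fun p : ℕ × I4 => ss' y p * y p.1 p.2 ^ 2 := by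
    apply Summable.of_nonneg_of_le _ _ (hsum.mul_left 2)
    · intro p; exact mul_nonneg (hss'b p).1 (sq_nonneg _)
    · intro p
      exact mul_le_mul_of_nonneg_right (hss'b p).2 (sq_nonneg _)
  -- reindexing identities
  have E1 : ∑' m : I4, FF1 y m = ∑' p : ℕ × I4, FF1' y p := by
    have hsupport : Function.support (FF1' y) ⊆ Set.range (fun m : I4 => ((1, m) : ℕ × I4)) := by
      intro p hp
      have h1 : p.1 = 1 := by
        by_contra hc
        exact hp (if_neg hc)
      exact ⟨p.2, Prod.ext h1.symm rfl⟩
    rw [← hιinj.tsum_eq hsupport]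
    exact tsum_congr fun m => (if_pos rfl).symm
  have E2 : ∑' p : ℕ × I4, ss y p * y (p.1 + 1) p.2 ^ 2
      = ∑' p : ℕ × I4, ss' y p * y p.1 p.2 ^ 2 := by
    have hsupport : Function.support (fun p : ℕ × I4 => ss' y p * y p.1 p.2 ^ 2)
        ⊆ Set.range (fun p : ℕ × I4 => ((p.1 + 1, p.2) : ℕ × I4)) := by
      intro p hp
      rcases Nat.eq_zero_or_pos p.1 with h0 | h0
      · exfalso
        apply hp
        show ss' y p * y p.1 p.2 ^ 2 = 0
        rw [ss', if_pos h0, zero_mul]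
      · exact ⟨(p.1 - 1, p.2), Prod.ext (by simp; omega) rfl⟩
    rw [← hσinj.tsum_eq hsupport]
    refine tsum_congr fun q => ?_
    have : ss' y (q.1 + 1, q.2) = ss y q := by
      rw [ss', if_neg (Nat.succ_ne_zero _)]
      show ss y (q.1 + 1 - 1, q.2) = ss y q
      rw [Nat.add_sub_cancel]
    show ss' y (q.1 + 1, q.2) * y (q.1 + 1) q.2 ^ 2 = _
    rw [this]
  -- pointwise AM-GM and positivity
  have step1 : ∑' p : ℕ × I4, ((dd p.1 p.2 - tt y p) * y p.1 p.2 ^ 2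
        - ss y p * y (p.1 + 1) p.2 ^ 2)
      ≤ ∑' p : ℕ × I4, (FF1' y p + FF2 y p - 18 / 85 * GG y p) := by
    refine Summable.tsum_le_tsum (fun p => amgm y p) (sA.sub sB) ((sF1'.add sF2).sub (sG.mul_left _))
  have step2 : ∑' p : ℕ × I4, ((dd p.1 p.2 - tt y p) * y p.1 p.2 ^ 2
        - ss y p * y (p.1 + 1) p.2 ^ 2)
      = ∑' p : ℕ × I4, ((dd p.1 p.2 - tt y p) * y p.1 p.2 ^ 2)
        - ∑' p : ℕ × I4, (ss y p * y (p.1 + 1) p.2 ^ 2) := Summable.tsum_sub sA sB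
  have step3 : ∑' p : ℕ × I4, ((dd p.1 p.2 - tt y p) * y p.1 p.2 ^ 2)
        - ∑' p : ℕ × I4, (ss' y p * y p.1 p.2 ^ 2)
      = ∑' p : ℕ × I4, ((dd p.1 p.2 - tt y p - ss' y p) * y p.1 p.2 ^ 2) := by
    rw [← Summable.tsum_sub sA sB']
    exact tsum_congr fun p => by ring
  have step4 : (0:ℝ) ≤ ∑' p : ℕ × I4, ((dd p.1 p.2 - tt y p - ss' y p) * y p.1 p.2 ^ 2) :=
    tsum_nonneg (core y hyN hy0 hy1)
  have step5 : ∑' p : ℕ × I4, (FF1' y p + FF2 y p - 18 / 85 * GG y p)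
      = (∑' p : ℕ × I4, FF1' y p) + (∑' p : ℕ × I4, FF2 y p)
        - 18 / 85 * ∑' p : ℕ × I4, GG y p := by
    rw [Summable.tsum_sub (sF1'.add sF2) (sG.mul_left _), Summable.tsum_add sF1' sF2, tsum_mul_left]
  rw [E1]
  linarith [step1, step2, step3, step4, step5, E2]

/-- **Spectral gap for the velocity component.** If `y(ℓ,m)` vanishes for `m ∉ N(ℓ)`,
`y(0,0) = y(1,0) = 0`, and `Σ y(ℓ,m)² < ∞`, then all the series below converge
absolutely and
`Σ_{m∈N(1), m₁=1} (1/3) y(1,m)² + Σ_{ℓ≥2} [α y²/(ℓ+2)² + β y y'/((ℓ+2)(ℓ+3))]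
  ≥ (18/85) Σ_{ℓ≥0} [y² + 2 C₅ y y']`. -/
theorem spectral_gap_velocity
    (y : ℕ → ℤ × ℤ × ℤ × ℤ → ℝ)
    (hyN : ∀ (ℓ : ℕ) (m : ℤ × ℤ × ℤ × ℤ), ¬ inN ℓ m → y ℓ m = 0)
    (hy0 : y 0 (0, 0, 0, 0) = 0)
    (hy1 : y 1 (0, 0, 0, 0) = 0)
    (hsum : Summable fun p : ℕ × (ℤ × ℤ × ℤ × ℤ) => y p.1 p.2 ^ 2) :
    (Summable fun m : ℤ × ℤ × ℤ × ℤ =>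
      |if inN 1 m ∧ m.1 = 1 then (1 / 3) * y 1 m ^ 2 else 0|) ∧
    (Summable fun p : ℕ × (ℤ × ℤ × ℤ × ℤ) =>
      |if 2 ≤ p.1 then
          αc p.1 p.2.1 * y p.1 p.2 ^ 2 / ((p.1 : ℝ) + 2) ^ 2
            + βc p.1 p.2.1 * y p.1 p.2 * y (p.1 + 1) p.2 / (((p.1 : ℝ) + 2) * ((p.1 : ℝ) + 3))
        else 0|) ∧
    (Summable fun p : ℕ × (ℤ × ℤ × ℤ × ℤ) =>
      |y p.1 p.2 ^ 2 + 2 * C₅ p.1 p.2.1 * y p.1 p.2 * y (p.1 + 1) p.2|) ∧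
    (18 / 85) * ∑' p : ℕ × (ℤ × ℤ × ℤ × ℤ),
        (y p.1 p.2 ^ 2 + 2 * C₅ p.1 p.2.1 * y p.1 p.2 * y (p.1 + 1) p.2)
      ≤ (∑' m : ℤ × ℤ × ℤ × ℤ, (if inN 1 m ∧ m.1 = 1 then (1 / 3) * y 1 m ^ 2 else 0))
        + ∑' p : ℕ × (ℤ × ℤ × ℤ × ℤ),
            (if 2 ≤ p.1 then
                αc p.1 p.2.1 * y p.1 p.2 ^ 2 / ((p.1 : ℝ) + 2) ^ 2
                  + βc p.1 p.2.1 * y p.1 p.2 * y (p.1 + 1) p.2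
                    / (((p.1 : ℝ) + 2) * ((p.1 : ℝ) + 3))
              else 0) := by
  exact spectral_gap_velocity' y hyN hy0 hy1 hsum
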